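/- Let N = 2m+1 ≥ 3 be an odd integer, k ∈ {1,…,m}, s = e^{2πi/N}, c_k = cos(πk/N), s_k = sin(πk/N). Fix λ ∈ ℂ and set ξ_k = Δ₀(λ) + s_k² and ρ_k = (s_k²/c_k²)·(c_k² − ξ_k²). Let M be any 2×2 complex matrix with det M = s^{−k} and trace M = 4ξ_k/(1 + s^k). Then every eigenvalue τ of M is nonzero and satisfies ((τ + τ⁻¹)/2 − ξ_k)² = ρ_k. (Thus the Lyapunov functions Δ_{k,±}, formed as (τ + τ⁻¹)/2 from the eigenvalues of the monodromy matrix M_k(λ), are exactly the two branches ξ_k ± √ρ_k.) -/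

import Mathlib

open MeasureTheory

noncomputable section

/-- `(y, y′)` is a solution of `−y″ + q·y = λ·y` on `[0,1]`,
in the integral-equation sense. -/
def IsSol (q : ℝ → ℝ) (lam : ℂ) (y y' : ℝ → ℂ) : Prop :=
  (∀ x ∈ Set.Icc (0:ℝ) 1, y x = y 0 + ∫ t in (0:ℝ)..x, y' t) ∧
  (∀ x ∈ Set.Icc (0:ℝ) 1, y' x = y' 0 + ∫ t in (0:ℝ)..x, ((q t : ℂ) - lam) * y t)

/-- if `M` is a `2×2` complex matrix with `det M = s^{−k}` and
`trace M = 4·ξ_k/(1 + s^k)`, where `ξ_k = Δ₀(λ) + s_k²`, then every eigenvalue `τ`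
of `M` is nonzero and satisfies `((τ + τ⁻¹)/2 − ξ_k)² = ρ_k`. -/
theorem lyapunov_branches
    (q : ℝ → ℝ) (hq : MemLp q 2 (volume.restrict (Set.Icc (0:ℝ) 1)))
    (m N k : ℕ) (hm : 1 ≤ m) (hN : N = 2 * m + 1) (hk1 : 1 ≤ k) (hk2 : k ≤ m)
    (s : ℂ) (hs : s = Complex.exp (2 * (Real.pi : ℂ) * Complex.I / (N : ℂ)))
    (ck sk : ℝ) (hck : ck = Real.cos (Real.pi * k / N)) (hsk : sk = Real.sin (Real.pi * k / N))
    (lam : ℂ) (th th' ph ph' : ℝ → ℂ)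
    (hth : IsSol q lam th th') (hth0 : th 0 = 1) (hth'0 : th' 0 = 0)
    (hph : IsSol q lam ph ph') (hph0 : ph 0 = 0) (hph'0 : ph' 0 = 1)
    (xi : ℂ)
    (hxi : xi = 2 * ((ph' 1 + th 1) / 2) ^ 2 + th' 1 * ph 1 / 4 - 1 + ((sk : ℂ)) ^ 2)
    (rho : ℂ) (hrho : rho = (((sk : ℂ)) ^ 2 / ((ck : ℂ)) ^ 2) * (((ck : ℂ)) ^ 2 - xi ^ 2))
    (M : Matrix (Fin 2) (Fin 2) ℂ)
    (hdet : M.det = s ^ (-(k : ℤ))) (htr : M.trace = 4 * xi / (1 + s ^ k))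
    (tau : ℂ) (htau : (M - tau • (1 : Matrix (Fin 2) (Fin 2) ℂ)).det = 0) :
    tau ≠ 0 ∧ ((tau + tau⁻¹) / 2 - xi) ^ 2 = rho := by
  have hNR : (0:ℝ) < N := by
    have : (3:ℕ) ≤ N := by omega
    exact_mod_cast Nat.lt_of_lt_of_le (by norm_num) this
  have hNne : (N:ℂ) ≠ 0 := by
    exact_mod_cast Nat.cast_ne_zero.mpr (by omega)
  set e : ℂ := (ck:ℂ) + (sk:ℂ) * Complex.I with he
  set f : ℂ := (ck:ℂ) - (sk:ℂ) * Complex.I with hf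
  have hpyth : (ck:ℂ)^2 + (sk:ℂ)^2 = 1 := by
    have h := Real.sin_sq_add_cos_sq (Real.pi * k / N)
    rw [hck, hsk]
    exact_mod_cast by push_cast; linarith
  have hef : e * f = 1 := by
    rw [he, hf]
    linear_combination hpyth - (sk:ℂ)^2 * Complex.I_sq
  have hene : e ≠ 0 := left_ne_zero_of_mul_eq_one hef
  have hfne : f ≠ 0 := right_ne_zero_of_mul_eq_one hef
  -- ck ≠ 0
  have hckpos : 0 < ck := by
    rw [hck]
    apply Real.cos_pos_of_mem_Ioo
    constructor
    · have : 0 < Real.pi * k / N := by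
        apply div_pos (mul_pos Real.pi_pos (by exact_mod_cast hk1)) hNR
      linarith [Real.pi_pos]
    · rw [div_lt_iff₀ hNR]
      have hkN : (2:ℝ) * k < N := by
        have : (2*k:ℕ) < N := by omega
        exact_mod_cast this
      nlinarith [Real.pi_pos]
  have hckne : (ck:ℂ) ≠ 0 := by exact_mod_cast hckpos.ne'
  -- s^k = e^2
  have hsk2 : s ^ k = e ^ 2 := by
    have hθ : e = Complex.exp (((Real.pi * k / N : ℝ) : ℂ) * Complex.I) := by
      rw [Complex.exp_mul_I, he, hck, hsk]
      push_cast [← Complex.ofReal_cos, ← Complex.ofReal_sin]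
      norm_num
    rw [hθ, hs, ← Complex.exp_nat_mul, ← Complex.exp_nat_mul]
    · congr 1
      push_cast
      field_simp
  have hdetv : M.det = f ^ 2 := by
    rw [hdet, zpow_neg, zpow_natCast, hsk2]
    have h1 : f ^ 2 * e ^ 2 = 1 := by linear_combination (e*f + 1) * hef
    exact (inv_eq_of_mul_eq_one_left h1)
  -- characteristic equation
  have key : tau ^ 2 - M.trace * tau + M.det = 0 := by
    have h := htau
    rw [Matrix.det_fin_two] at h
    simp only [Matrix.sub_apply, Matrix.smul_apply, Matrix.one_apply_eq,
      Matrix.one_apply_ne (by decide : (0:Fin 2) ≠ 1),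
      Matrix.one_apply_ne (by decide : (1:Fin 2) ≠ 0), smul_eq_mul] at h
    rw [Matrix.det_fin_two, Matrix.trace_fin_two]
    linear_combination h
  have keyf : tau ^ 2 - M.trace * tau + f ^ 2 = 0 := by rw [hdetv] at key; exact key
  have htau0 : tau ≠ 0 := by
    intro h0
    rw [h0] at keyf
    simp at keyf
    exact hfne keyf
  have hsum : e + f = 2 * (ck:ℂ) := by rw [he, hf]; ring
  have h1e : 1 + s ^ k ≠ 0 := by
    rw [hsk2]
    have : 1 + e ^ 2 = e * (e + f) := by linear_combination -hef
    rw [this, hsum]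
    exact mul_ne_zero hene (by simp [hckne])
  have htrv : M.trace * (e * (e + f)) = 4 * xi := by
    have h1 : 1 + e ^ 2 = e * (e + f) := by linear_combination -hef
    rw [← h1, ← hsk2, htr, div_mul_cancel₀ _ h1e]
  have hxiv : xi = M.trace * e * (e + f) / 4 := by
    field_simp
    linear_combination -htrv
  have hinv : tau⁻¹ = e ^ 2 * (M.trace - tau) := by
    have h2 : (e ^ 2 * (M.trace - tau)) * tau = 1 := by
      linear_combination -e^2 * keyf + (e*f + 1) * hef
    exact (inv_eq_of_mul_eq_one_left h2)
  refine ⟨htau0, ?_⟩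
  have hck2 : (ck:ℂ) = (e + f) / 2 := by rw [he, hf]; ring
  have hsk2c : (sk:ℂ) ^ 2 = -((e - f) / 2) ^ 2 := by
    rw [he, hf]
    linear_combination (sk:ℂ)^2 * Complex.I_sq
  have hefsum : e + f ≠ 0 := by rw [hsum]; simp [hckne]
  rw [hinv, hrho, hxiv, hck2, hsk2c]
  rw [div_mul_eq_mul_div, eq_div_iff (pow_ne_zero 2 (by simpa using hefsum : (e+f)/2 ≠ 0))]
  linear_combination ((1 - e^2)^2 * (e+f)^2 / 16) * keyf -
    (((1 - e^2) * M.trace * tau + e * (e - 2*f + e^2*f)) * (e+f)^2 / 16) * hef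
  end
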